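/- arXiv:1912.08105 — 4 statements merged into one kernel-verified Lean document; each statement's English description precedes it below -/
import Mathlib

section
/- Suppose Im A ⊆ D₀(g(A)). Then the operator g(A)A is bounded relative to A: there exists a constant C > 0 such that ‖g(A)(Ax)‖ ≤ C(‖x‖ + ‖Ax‖) for all x ∈ D(A). -/
open MeasureTheory Filter Topology Set

noncomputable section

/-- `IsGen T x y` means `x` lies in the domain `D(A)` of the generator `A` of the
`C₀`-semigroup `T` and `A x = y`. -/
def IsGen {X : Type*} [NormedAddCommGroup X] [NormedSpace ℂ X]
    (T : ℝ → X →L[ℂ] X) (x y : X) : Prop :=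
  Tendsto (fun t : ℝ => t⁻¹ • (T t x - x)) (𝓝[>] (0 : ℝ)) (𝓝 y)

/-!
The graph of the generator is closed in `X × X`: by the fundamental theorem of calculus it is cut
out by the identities `T t x - x = ∫₀ᵗ T u y`, both sides of which are continuous in `(x, y)`.
So the graph is a Banach space. On it the truncations `(x, y) ↦ ∫_{[0,r]} h t • T t y dμ` are
bounded operators which, since `Im A ⊆ D₀(g(A))`, converge pointwise to `(x, y) ↦ g(A) y` as
`r → ∞`; by the uniform boundedness principle the limit is a bounded operator on the graph.
-/

section OperatorIntegral

variable {α 𝕜 E F : Type*} [MeasurableSpace α] {ν : Measure α} [IsFiniteMeasure ν]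
  [NontriviallyNormedField 𝕜] [NormedAddCommGroup E] [NormedSpace 𝕜 E]
  [NormedAddCommGroup F] [NormedSpace 𝕜 F] {S : α → E →L[𝕜] F} {M : ℝ}

lemma integrable_apply_of_norm_le (hM : ∀ᵐ a ∂ν, ‖S a‖ ≤ M)
    (hS : ∀ y, AEStronglyMeasurable (fun a => S a y) ν) (y : E) :
    Integrable (fun a => S a y) ν :=
  .of_bound (hS y) (M * ‖y‖) (hM.mono fun a ha => (S a).le_of_opNorm_le ha y)

variable [NormedSpace ℝ F] [SMulCommClass ℝ 𝕜 F]

variable (ν S) in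
def strongIntegral (hM : ∀ᵐ a ∂ν, ‖S a‖ ≤ M)
    (hS : ∀ y, AEStronglyMeasurable (fun a => S a y) ν) : E →L[𝕜] F :=
  LinearMap.mkContinuous
    { toFun := fun y => ∫ a, S a y ∂ν
      map_add' := fun y z => by
        simp only [map_add]
        exact integral_add (integrable_apply_of_norm_le hM hS y)
          (integrable_apply_of_norm_le hM hS z)
      map_smul' := fun c y => by
        simp only [map_smul, RingHom.id_apply]
        exact integral_smul c _ }
    (M * ν.real univ)
    fun y => (norm_integral_le_of_norm_le_const
      (hM.mono fun a ha => (S a).le_of_opNorm_le ha y)).trans_eq (by ring)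

@[simp]
lemma strongIntegral_apply (hM : ∀ᵐ a ∂ν, ‖S a‖ ≤ M)
    (hS : ∀ y, AEStronglyMeasurable (fun a => S a y) ν) (y : E) :
    strongIntegral ν S hM hS y = ∫ a, S a y ∂ν :=
  rfl

theorem exists_clm_eq_setIntegral_Ici [CompleteSpace E] {μ : Measure ℝ}
    [IsLocallyFiniteMeasure μ] {S : ℝ → E →L[𝕜] F} {M : ℝ} (hM : ∀ t, 0 ≤ t → ‖S t‖ ≤ M)
    (hS : ∀ y, IntegrableOn (fun t => S t y) (Ici 0) μ) :
    ∃ L : E →L[𝕜] F, ∀ y, L y = ∫ t in Ici 0, S t y ∂μ := by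
  have (r : ℝ) : IsFiniteMeasure (μ.restrict (Icc 0 r)) :=
    isFiniteMeasure_restrict.2 measure_Icc_lt_top.ne
  let truncation (r : ℝ) : E →L[𝕜] F := strongIntegral (μ.restrict (Icc 0 r)) S
    (ae_restrict_of_forall_mem measurableSet_Icc fun t ht => hM t ht.1)
    fun y => ((hS y).mono_set Icc_subset_Ici_self).aestronglyMeasurable
  have hlim : Tendsto (fun r y => truncation r y) atTop
      (𝓝 fun y => ∫ t in Ici 0, S t y ∂μ) := by
    refine tendsto_pi_nhds.2 fun y => ?_
    have := tendsto_setIntegral_of_monotone (fun r : ℝ => measurableSet_Icc)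
      (fun r r' hr => Icc_subset_Icc_right hr) (by rw [iUnion_Icc_right]; exact hS y)
    rwa [iUnion_Icc_right] at this
  exact ⟨continuousLinearMapOfTendsto truncation hlim, fun y => rfl⟩

end OperatorIntegral

section Generator

variable {X : Type*} [NormedAddCommGroup X] [NormedSpace ℂ X] {T : ℝ → X →L[ℂ] X}

variable (T) in
def generatorGraph : Submodule ℂ (X × X) where
  carrier := {p | IsGen T p.1 p.2}
  add_mem' {p q} hp hq := by
    refine (hp.add hq).congr fun t => ?_
    simp only [Prod.fst_add, map_add]
    module
  zero_mem' := tendsto_const_nhds.congr fun t => by simp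
  smul_mem' c p hp := by
    refine (hp.const_smul c).congr fun t => ?_
    simp only [Prod.smul_fst, map_smul]
    module

lemma IsGen.hasDerivWithinAt_orbit
    (hTadd : ∀ s t : ℝ, 0 ≤ s → 0 ≤ t → T (s + t) = (T s).comp (T t))
    {x y : X} (hxy : IsGen T x y) {b : ℝ} (hb : 0 ≤ b) :
    HasDerivWithinAt (fun s => T s x) (T b y) (Ici b) b := by
  rw [← hasDerivWithinAt_Ioi_iff_Ici, hasDerivWithinAt_iff_tendsto_slope' (by simp),
    ← add_zero b, ← map_add_left_nhdsGT, tendsto_map'_iff, add_zero]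
  refine ((T b).continuous.tendsto y |>.comp hxy).congr' ?_
  filter_upwards [self_mem_nhdsWithin] with ε (hε : 0 < ε)
  simp [slope_def_module, hTadd b ε hb hε.le, smul_sub]

variable [CompleteSpace X]

lemma hasDerivWithinAt_integral_orbit
    (hTcont : ∀ x : X, ContinuousOn (fun t => T t x) (Ici (0 : ℝ)))
    (y : X) {b : ℝ} (hb : 0 ≤ b) :
    HasDerivWithinAt (fun s => ∫ u in (0 : ℝ)..s, T u y) (T b y) (Ici b) b :=
  intervalIntegral.integral_hasDerivWithinAt_right (t := Ioi b)
    (((hTcont y).mono Icc_subset_Ici_self).intervalIntegrable_of_Icc hb)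
    ⟨Ici 0, mem_of_superset self_mem_nhdsWithin (Ioi_subset_Ici hb),
      (hTcont y).aestronglyMeasurable measurableSet_Ici⟩
    (((hTcont y) b hb).mono (Ioi_subset_Ici hb))

lemma IsGen.orbit_sub_eq_integral (hT0 : T 0 = ContinuousLinearMap.id ℂ X)
    (hTadd : ∀ s t : ℝ, 0 ≤ s → 0 ≤ t → T (s + t) = (T s).comp (T t))
    (hTcont : ∀ x : X, ContinuousOn (fun t => T t x) (Ici (0 : ℝ)))
    {x y : X} (hxy : IsGen T x y) {t : ℝ} (ht : 0 ≤ t) :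
    T t x - x = ∫ u in (0 : ℝ)..t, T u y := by
  have hint : IntegrableOn (fun u => T u y) (uIcc 0 t) :=
    ((hTcont y).mono (uIcc_of_le ht ▸ Icc_subset_Ici_self)).integrableOn_compact isCompact_uIcc
  refine eq_of_has_deriv_right_eq
    (fun s hs => (hxy.hasDerivWithinAt_orbit hTadd hs.1).sub_const x)
    (fun s hs => hasDerivWithinAt_integral_orbit hTcont y hs.1)
    (((hTcont x).mono Icc_subset_Ici_self).sub continuousOn_const)
    (uIcc_of_le ht ▸ intervalIntegral.continuousOn_primitive_interval hint)
    (by simp [hT0]) t ⟨ht, le_rfl⟩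

lemma isGen_of_orbit_sub_eq_integral (hT0 : T 0 = ContinuousLinearMap.id ℂ X)
    (hTcont : ∀ x : X, ContinuousOn (fun t => T t x) (Ici (0 : ℝ))) {x y : X}
    (h : ∀ t : ℝ, 0 ≤ t → T t x - x = ∫ u in (0 : ℝ)..t, T u y) : IsGen T x y := by
  have := hasDerivWithinAt_integral_orbit hTcont y le_rfl
  rw [← hasDerivWithinAt_Ioi_iff_Ici, hasDerivWithinAt_iff_tendsto_slope' (by simp), hT0] at this
  refine this.congr' ?_
  filter_upwards [self_mem_nhdsWithin] with t (ht : 0 < t)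
  simp [slope_def_module, ← h t ht.le]

lemma isClosed_generatorGraph (hT0 : T 0 = ContinuousLinearMap.id ℂ X)
    (hTadd : ∀ s t : ℝ, 0 ≤ s → 0 ≤ t → T (s + t) = (T s).comp (T t))
    (hTcont : ∀ x : X, ContinuousOn (fun t => T t x) (Ici (0 : ℝ)))
    {M : ℝ} (hM : ∀ t : ℝ, 0 ≤ t → ‖T t‖ ≤ M) :
    IsClosed (generatorGraph T : Set (X × X)) := by
  let primitive (t : ℝ) : X →L[ℂ] X := strongIntegral (volume.restrict (Ioc 0 t)) T
    (ae_restrict_of_forall_mem measurableSet_Ioc fun u hu => hM u hu.1.le)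
    fun y => ((hTcont y).mono (Ioc_subset_Ioi_self.trans Ioi_subset_Ici_self)
      |>.aestronglyMeasurable measurableSet_Ioc)
  have hgraph : (generatorGraph T : Set (X × X)) =
      ⋂ (t : ℝ) (_ : 0 ≤ t), {p | T t p.1 - p.1 = primitive t p.2} := by
    ext p
    simp only [SetLike.mem_coe, mem_iInter, mem_ofPred_eq, primitive, strongIntegral_apply]
    refine ⟨fun hp t ht => ?_,
      fun hp => isGen_of_orbit_sub_eq_integral hT0 hTcont fun t ht => ?_⟩
    · rw [← intervalIntegral.integral_of_le ht]
      exact hp.orbit_sub_eq_integral hT0 hTadd hTcont ht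
    · rw [intervalIntegral.integral_of_le ht]
      exact hp t ht
  rw [hgraph]
  exact isClosed_biInter fun t _ => isClosed_eq (by fun_prop) (by fun_prop)

end Generator

theorem stmt1_general {X : Type*} [NormedAddCommGroup X] [NormedSpace ℂ X] [CompleteSpace X]
    (T : ℝ → X →L[ℂ] X)
    (hT0 : T 0 = ContinuousLinearMap.id ℂ X)
    (hTadd : ∀ s t : ℝ, 0 ≤ s → 0 ≤ t → T (s + t) = (T s).comp (T t))
    (hTcont : ∀ x : X, ContinuousOn (fun t => T t x) (Ici (0 : ℝ)))
    (hTbdd : ∃ M : ℝ, ∀ t : ℝ, 0 ≤ t → ‖T t‖ ≤ M)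
    (μ : Measure ℝ) [IsLocallyFiniteMeasure μ]
    (h : ℝ → ℂ) (hnorm : ∀ t, ‖h t‖ = 1)
    (hRange : ∀ x y : X, IsGen T x y → IntegrableOn (fun t => h t • T t y) (Ici (0 : ℝ)) μ) :
    ∃ C > (0 : ℝ), ∀ x y : X, IsGen T x y →
      ‖∫ t in Ici (0 : ℝ), h t • T t y ∂μ‖ ≤ C * (‖x‖ + ‖y‖) := by
  obtain ⟨M, hM⟩ := hTbdd
  have := (isClosed_generatorGraph hT0 hTadd hTcont hM).completeSpace_coe
  let graphSnd := (ContinuousLinearMap.snd ℂ X X).comp (generatorGraph T).subtypeL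
  have hgraphSnd : ‖graphSnd‖ ≤ 1 :=
    (ContinuousLinearMap.opNorm_comp_le _ _).trans
      (mul_le_one₀ (ContinuousLinearMap.norm_snd_le ℂ X X) (norm_nonneg _)
        (Submodule.norm_subtypeL_le _))
  obtain ⟨L, hL⟩ := exists_clm_eq_setIntegral_Ici (μ := μ)
    (S := fun t => h t • (T t).comp graphSnd)
    (fun t ht => by
      rw [norm_smul, hnorm, one_mul]
      exact (ContinuousLinearMap.opNorm_comp_le _ _).trans
        ((mul_le_of_le_one_right (norm_nonneg _) hgraphSnd).trans (hM t ht)))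
    fun p => hRange _ _ p.2
  refine ⟨‖L‖ + 1, by positivity, fun x y hxy => ?_⟩
  calc ‖∫ t in Ici (0 : ℝ), h t • T t y ∂μ‖ = ‖L ⟨(x, y), hxy⟩‖ := by rw [hL]; rfl
    _ ≤ ‖L‖ * max ‖x‖ ‖y‖ := L.le_opNorm _
    _ ≤ (‖L‖ + 1) * (‖x‖ + ‖y‖) := by
      gcongr
      · linarith
      · exact max_le_add_of_nonneg (norm_nonneg x) (norm_nonneg y)

/-- The (σ-finite, regular) complex Borel measure `a` on `[0,∞)` is encoded
by its polar decomposition `da = h dμ` where `μ = |a|` is a σ-finite locally finite positive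
Borel measure and `‖h t‖ = 1`; the Hille–Phillips operator is
`g(A)x = ∫_{[0,∞)} h t • T t x ∂μ` with domain `D₀(g(A))` the set of `x` for which the
integrand is Bochner integrable. If `Im A ⊆ D₀(g(A))`, then `g(A)A` is bounded relative to
`A`: there is `C > 0` with `‖g(A)(Ax)‖ ≤ C(‖x‖ + ‖Ax‖)` for all `x ∈ D(A)`. -/
theorem stmt1 {X : Type*} [NormedAddCommGroup X] [NormedSpace ℂ X] [CompleteSpace X]
    (T : ℝ → X →L[ℂ] X)
    (hT0 : T 0 = ContinuousLinearMap.id ℂ X)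
    (hTadd : ∀ s t : ℝ, 0 ≤ s → 0 ≤ t → T (s + t) = (T s).comp (T t))
    (hTcont : ∀ x : X, ContinuousOn (fun t => T t x) (Ici (0 : ℝ)))
    (hTbdd : ∃ M : ℝ, ∀ t : ℝ, 0 ≤ t → ‖T t‖ ≤ M)
    (μ : Measure ℝ) [SigmaFinite μ] [IsLocallyFiniteMeasure μ]
    (h : ℝ → ℂ) (hmeas : Measurable h) (hnorm : ∀ t, ‖h t‖ = 1)
    (hRange : ∀ x y : X, IsGen T x y → IntegrableOn (fun t => h t • T t y) (Ici (0 : ℝ)) μ) :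
    ∃ C > (0 : ℝ), ∀ x y : X, IsGen T x y →
      ‖∫ t in Ici (0 : ℝ), h t • T t y ∂μ‖ ≤ C * (‖x‖ + ‖y‖) :=
  stmt1_general T hT0 hTadd hTcont hTbdd μ h hnorm hRange
end
end

section
/- Let α > 1 and define (−A)^{−α}x := (1/Γ(α)) ∫₀^∞ T(t)x t^{α−1} dt (Bochner integral), with domain D₀((−A)^{−α}) the set of x ∈ X for which this integral exists. Assume A is injective and there exist constants C > 0 and δ > α − 1 such that ‖T(t)‖ ≤ C/t^δ for all t > 0. Then Im A ⊆ D₀((−A)^{−α}) and the restriction of (−A)^{−α} to Im A is closed: if y_n ∈ Im A, y_n → y and (−A)^{−α}y_n → z in X, then y ∈ Im A and (−A)^{−α}y = z. -/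
/-!
Since `‖T t‖ ≤ C / t ^ δ → 0`, some `‖T t₀‖` is at most `1 / 2`, and the semigroup law turns this
into exponential stability `‖T t‖ ≤ 2 M e^{-ω t}`. Hence every orbit is integrable, every `y` is
`A x` for `x = -∫₀^∞ T(s) y ds`, and `(−A)^{−α}` is a bounded operator on all of `X = Im A`,
which makes its closedness automatic.
-/

open MeasureTheory Filter Topology Set

noncomputable section

lemma integrableOn_rpow_mul_exp_neg_mul {ω s : ℝ} (hω : 0 < ω) (hs : -1 < s) :
    IntegrableOn (fun t : ℝ => t ^ s * Real.exp (-ω * t)) (Ici 0) := by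
  rw [integrableOn_Ici_iff_integrableOn_Ioi]
  simpa using integrableOn_rpow_mul_exp_neg_mul_rpow hs zero_lt_one hω

section

variable {X : Type*} [NormedAddCommGroup X] [NormedSpace ℂ X] {T : ℝ → X →L[ℂ] X}

lemma exists_norm_le_half_of_norm_le_div_rpow {C δ : ℝ} (hδ : 0 < δ)
    (hdecay : ∀ t : ℝ, 0 < t → ‖T t‖ ≤ C / t ^ δ) : ∃ t₀ : ℝ, 0 < t₀ ∧ ‖T t₀‖ ≤ 1 / 2 := by
  have hlim : Tendsto (fun t : ℝ => C / t ^ δ) atTop (𝓝 0) :=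
    tendsto_const_nhds.div_atTop (tendsto_rpow_atTop hδ)
  obtain ⟨t₀, hle, ht₀⟩ :=
    ((hlim.eventually (ge_mem_nhds one_half_pos)).and (eventually_gt_atTop 0)).exists
  exact ⟨t₀, ht₀, (hdecay t₀ ht₀).trans hle⟩

lemma norm_le_mul_pow_of_nat_mul_le
    (hTadd : ∀ s t : ℝ, 0 ≤ s → 0 ≤ t → T (s + t) = (T s).comp (T t))
    {M q t₀ : ℝ} (hM : ∀ t : ℝ, 0 ≤ t → ‖T t‖ ≤ M) (ht₀ : 0 ≤ t₀) (hq : ‖T t₀‖ ≤ q) :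
    ∀ (n : ℕ) (t : ℝ), n * t₀ ≤ t → ‖T t‖ ≤ M * q ^ n := by
  intro n
  induction n with
  | zero => intro t ht; simpa using hM t (by simpa using ht)
  | succ n ih =>
    intro t ht
    have hsplit : T t = (T (t - t₀)).comp (T t₀) := by
      rw [← hTadd _ _ (by push_cast at ht; nlinarith [Nat.cast_nonneg (α := ℝ) n]) ht₀,
        sub_add_cancel]
    have ih' := ih (t - t₀) (by push_cast at ht; linarith)
    calc ‖T t‖ ≤ ‖T (t - t₀)‖ * ‖T t₀‖ := hsplit ▸ (T (t - t₀)).opNorm_comp_le (T t₀)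
      _ ≤ M * q ^ n * q := mul_le_mul ih' hq (norm_nonneg _) ((norm_nonneg _).trans ih')
      _ = M * q ^ (n + 1) := by ring

lemma norm_le_exp_of_norm_le_half
    (hTadd : ∀ s t : ℝ, 0 ≤ s → 0 ≤ t → T (s + t) = (T s).comp (T t))
    {M t₀ : ℝ} (hM : ∀ t : ℝ, 0 ≤ t → ‖T t‖ ≤ M) (ht₀ : 0 < t₀) (hT₀ : ‖T t₀‖ ≤ 1 / 2)
    {t : ℝ} (ht : 0 ≤ t) : ‖T t‖ ≤ 2 * M * Real.exp (-(Real.log 2 / t₀) * t) := by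
  set n := ⌊t / t₀⌋₊
  have hn : n * t₀ ≤ t := (le_div_iff₀ ht₀).1 (Nat.floor_le (div_nonneg ht ht₀.le))
  have hn' : t / t₀ < n + 1 := Nat.lt_floor_add_one _
  have hhalf : (1 / 2 : ℝ) ^ n ≤ 2 * Real.exp (-(Real.log 2 / t₀) * t) := by
    have hexp : (1 / 2 : ℝ) ^ n = Real.exp (-(n * Real.log 2)) := by
      rw [Real.exp_neg, Real.exp_nat_mul, Real.exp_log two_pos, one_div, inv_pow]
    have hlog : Real.log 2 * (t / t₀) ≤ Real.log 2 * (n + 1) :=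
      mul_le_mul_of_nonneg_left hn'.le (Real.log_pos one_lt_two).le
    rw [hexp, ← Real.exp_log (two_pos (α := ℝ)), ← Real.exp_add, Real.exp_log two_pos,
      Real.exp_le_exp, neg_mul, div_mul_eq_mul_div, mul_div_assoc]
    linarith
  calc ‖T t‖ ≤ M * (1 / 2) ^ n := norm_le_mul_pow_of_nat_mul_le hTadd hM ht₀.le hT₀ n t hn
    _ ≤ M * (2 * Real.exp (-(Real.log 2 / t₀) * t)) :=
      mul_le_mul_of_nonneg_left hhalf ((norm_nonneg _).trans (hM 0 le_rfl))
    _ = 2 * M * Real.exp (-(Real.log 2 / t₀) * t) := by ring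

variable {K ω s : ℝ}

lemma norm_rpow_smul_apply_le (hexp : ∀ t : ℝ, 0 ≤ t → ‖T t‖ ≤ K * Real.exp (-ω * t))
    {t : ℝ} (ht : 0 ≤ t) (y : X) :
    ‖t ^ s • T t y‖ ≤ K * ‖y‖ * (t ^ s * Real.exp (-ω * t)) := by
  rw [norm_smul, Real.norm_of_nonneg (Real.rpow_nonneg ht s)]
  calc t ^ s * ‖T t y‖ ≤ t ^ s * (K * Real.exp (-ω * t) * ‖y‖) :=
        mul_le_mul_of_nonneg_left ((T t).le_of_opNorm_le (hexp t ht) y)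
          (Real.rpow_nonneg ht s)
    _ = K * ‖y‖ * (t ^ s * Real.exp (-ω * t)) := by ring

lemma integrableOn_rpow_smul_apply (hω : 0 < ω) (hs : -1 < s)
    (hexp : ∀ t : ℝ, 0 ≤ t → ‖T t‖ ≤ K * Real.exp (-ω * t)) {y : X}
    (hcont : ContinuousOn (fun t => T t y) (Ici 0)) :
    IntegrableOn (fun t : ℝ => t ^ s • T t y) (Ici 0) := by
  refine Integrable.mono' ((integrableOn_rpow_mul_exp_neg_mul hω hs).const_mul (K * ‖y‖))
    ((measurable_id.pow_const s).aestronglyMeasurable.smul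
      (hcont.aestronglyMeasurable measurableSet_Ici)) ?_
  filter_upwards [ae_restrict_mem measurableSet_Ici] with t ht
  exact norm_rpow_smul_apply_le hexp ht y

lemma norm_integral_rpow_smul_apply_le (hω : 0 < ω) (hs : -1 < s)
    (hexp : ∀ t : ℝ, 0 ≤ t → ‖T t‖ ≤ K * Real.exp (-ω * t)) (y : X) :
    ‖∫ t in Ici (0 : ℝ), t ^ s • T t y‖ ≤
      (K * ∫ t in Ici (0 : ℝ), t ^ s * Real.exp (-ω * t)) * ‖y‖ := by
  have hbound := norm_integral_le_of_norm_le
    ((integrableOn_rpow_mul_exp_neg_mul hω hs).const_mul (K * ‖y‖))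
    ((ae_restrict_mem measurableSet_Ici).mono fun t ht => norm_rpow_smul_apply_le hexp ht y)
  rwa [integral_const_mul, mul_right_comm, mul_assoc, ← mul_assoc] at hbound

lemma continuous_integral_rpow_smul_apply (hω : 0 < ω) (hs : -1 < s)
    (hexp : ∀ t : ℝ, 0 ≤ t → ‖T t‖ ≤ K * Real.exp (-ω * t))
    (hcont : ∀ y : X, ContinuousOn (fun t => T t y) (Ici 0)) :
    Continuous fun y : X => ∫ t in Ici (0 : ℝ), t ^ s • T t y := by
  let I : X →+ X := AddMonoidHom.mk' (fun y => ∫ t in Ici (0 : ℝ), t ^ s • T t y) fun y₁ y₂ => by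
    simp only [map_add, smul_add]
    exact integral_add (integrableOn_rpow_smul_apply hω hs hexp (hcont y₁))
      (integrableOn_rpow_smul_apply hω hs hexp (hcont y₂))
  exact AddMonoidHomClass.continuous_of_bound I _ (norm_integral_rpow_smul_apply_le hω hs hexp)

variable [CompleteSpace X] {y : X}

lemma apply_integral_Ioi_eq_integral_Ioi
    (hTadd : ∀ s t : ℝ, 0 ≤ s → 0 ≤ t → T (s + t) = (T s).comp (T t))
    (hint : IntegrableOn (fun s => T s y) (Ioi 0)) {t : ℝ} (ht : 0 ≤ t) :
    T t (∫ s in Ioi (0 : ℝ), T s y) = ∫ s in Ioi t, T s y := by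
  have hshift := (measurePreserving_add_right volume t).setIntegral_image_emb
    (MeasurableEquiv.addRight t).measurableEmbedding (fun u => T u y) (Ioi 0)
  rw [image_add_const_Ioi, zero_add] at hshift
  rw [← (T t).integral_comp_comm hint, hshift]
  refine setIntegral_congr_fun measurableSet_Ioi fun s hs => ?_
  simp [add_comm s t, hTadd t s ht (le_of_lt hs)]

lemma isGen_neg_integral_Ioi (hT0 : T 0 = ContinuousLinearMap.id ℂ X)
    (hTadd : ∀ s t : ℝ, 0 ≤ s → 0 ≤ t → T (s + t) = (T s).comp (T t))
    (hcont : ContinuousOn (fun t => T t y) (Ici 0))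
    (hint : IntegrableOn (fun s => T s y) (Ioi 0)) :
    IsGen T (-∫ s in Ioi (0 : ℝ), T s y) y := by
  have hFTC : HasDerivWithinAt (fun u => ∫ s in (0 : ℝ)..u, T s y) (T 0 y) (Ici 0) 0 :=
    intervalIntegral.integral_hasDerivWithinAt_right IntervalIntegrable.refl
      ((hcont.mono Ioi_subset_Ici_self).stronglyMeasurableAtFilter_nhdsWithin measurableSet_Ioi 0)
      ((hcont.continuousWithinAt self_mem_Ici).mono Ioi_subset_Ici_self)
  rw [hasDerivWithinAt_iff_tendsto_slope, Ici_sdiff_left, hT0] at hFTC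
  refine hFTC.congr' (eventually_nhdsWithin_of_forall fun t (ht : 0 < t) => ?_)
  dsimp only
  rw [slope_def_module, sub_zero, intervalIntegral.integral_same, sub_zero, map_neg,
    apply_integral_Ioi_eq_integral_Ioi hTadd hint ht.le, neg_sub_neg,
    intervalIntegral.integral_Ioi_sub_Ioi hint ht.le]

end

theorem stmt9_general {X : Type*} [NormedAddCommGroup X] [NormedSpace ℂ X] [CompleteSpace X]
    (T : ℝ → X →L[ℂ] X)
    (hT0 : T 0 = ContinuousLinearMap.id ℂ X)
    (hTadd : ∀ s t : ℝ, 0 ≤ s → 0 ≤ t → T (s + t) = (T s).comp (T t))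
    (hTcont : ∀ x : X, ContinuousOn (fun t => T t x) (Ici (0 : ℝ)))
    (hTbdd : ∃ M : ℝ, ∀ t : ℝ, 0 ≤ t → ‖T t‖ ≤ M)
    (α C δ : ℝ) (hα : 1 < α) (hδ : α - 1 < δ)
    (hdecay : ∀ t : ℝ, 0 < t → ‖T t‖ ≤ C / t ^ δ) :
    (∀ y : X, (∃ x : X, IsGen T x y) →
      IntegrableOn (fun t => t ^ (α - 1) • T t y) (Ici (0 : ℝ)) volume) ∧
    ∀ (yseq : ℕ → X) (y z : X),
      (∀ n, ∃ x : X, IsGen T x (yseq n)) →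
      Tendsto yseq atTop (𝓝 y) →
      Tendsto (fun n => (Real.Gamma α)⁻¹ • ∫ t in Ici (0 : ℝ), t ^ (α - 1) • T t (yseq n))
        atTop (𝓝 z) →
      (∃ x : X, IsGen T x y) ∧
        (Real.Gamma α)⁻¹ • ∫ t in Ici (0 : ℝ), t ^ (α - 1) • T t y = z := by
  obtain ⟨M, hM⟩ := hTbdd
  obtain ⟨t₀, ht₀, hT₀⟩ := exists_norm_le_half_of_norm_le_div_rpow (by linarith) hdecay
  have hω : 0 < Real.log 2 / t₀ := div_pos (Real.log_pos one_lt_two) ht₀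
  have hexp := fun t (ht : 0 ≤ t) => norm_le_exp_of_norm_le_half hTadd hM ht₀ hT₀ ht
  have hs : -1 < α - 1 := by linarith
  refine ⟨fun y _ => integrableOn_rpow_smul_apply hω hs hexp (hTcont y),
    fun yseq y z _ hy hz => ⟨?_, ?_⟩⟩
  · have horbit := integrableOn_rpow_smul_apply hω neg_one_lt_zero hexp (hTcont y)
    simp only [Real.rpow_zero, one_smul] at horbit
    exact ⟨_, isGen_neg_integral_Ioi hT0 hTadd (hTcont y) (horbit.mono_set Ioi_subset_Ici_self)⟩
  · have hcont := continuous_integral_rpow_smul_apply hω hs hexp hTcont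
    exact tendsto_nhds_unique (((hcont.tendsto y).comp hy).const_smul _) hz

/-- For `α > 1` define
`(−A)^{−α} x := Γ(α)⁻¹ • ∫₀^∞ t^{α−1} • T(t)x dt` with domain the set of `x` for which the
Bochner integral exists. If `A` is injective and `‖T(t)‖ ≤ C/t^δ` for all `t > 0` with
`C > 0`, `δ > α − 1`, then `Im A ⊆ D₀((−A)^{−α})` and the restriction of `(−A)^{−α}` to
`Im A` is closed: if `yₙ ∈ Im A`, `yₙ → y` and `(−A)^{−α} yₙ → z`, then `y ∈ Im A`
and `(−A)^{−α} y = z`. -/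
theorem stmt9 {X : Type*} [NormedAddCommGroup X] [NormedSpace ℂ X] [CompleteSpace X]
    (T : ℝ → X →L[ℂ] X)
    (hT0 : T 0 = ContinuousLinearMap.id ℂ X)
    (hTadd : ∀ s t : ℝ, 0 ≤ s → 0 ≤ t → T (s + t) = (T s).comp (T t))
    (hTcont : ∀ x : X, ContinuousOn (fun t => T t x) (Ici (0 : ℝ)))
    (hTbdd : ∃ M : ℝ, ∀ t : ℝ, 0 ≤ t → ‖T t‖ ≤ M)
    (α C δ : ℝ) (hα : 1 < α) (hC : 0 < C) (hδ : α - 1 < δ)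
    (hInj : ∀ x₁ x₂ y : X, IsGen T x₁ y → IsGen T x₂ y → x₁ = x₂)
    (hdecay : ∀ t : ℝ, 0 < t → ‖T t‖ ≤ C / t ^ δ) :
    (∀ y : X, (∃ x : X, IsGen T x y) →
      IntegrableOn (fun t => t ^ (α - 1) • T t y) (Ici (0 : ℝ)) volume) ∧
    ∀ (yseq : ℕ → X) (y z : X),
      (∀ n, ∃ x : X, IsGen T x (yseq n)) →
      Tendsto yseq atTop (𝓝 y) →
      Tendsto (fun n => (Real.Gamma α)⁻¹ • ∫ t in Ici (0 : ℝ), t ^ (α - 1) • T t (yseq n))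
        atTop (𝓝 z) →
      (∃ x : X, IsGen T x y) ∧
        (Real.Gamma α)⁻¹ • ∫ t in Ici (0 : ℝ), t ^ (α - 1) • T t y = z :=
  stmt9_general T hT0 hTadd hTcont hTbdd α C δ hα hδ hdecay
end
end

section
/- Let 0 < α < 1 and assume there exist constants C > 0 and δ > α such that ‖T(t)‖ ≤ C/t^δ for all t > 0. Then for every x ∈ D(A) the Bochner integrals ∫₀^∞ T(t)(Ax) t^{α} dt and ∫₀^∞ T(t)x t^{α−1} dt both exist, t^{α}T(t)x → 0 as t → ∞, and (1/Γ(α+1)) ∫₀^∞ T(t)(−Ax) t^{α} dt = (1/Γ(α)) ∫₀^∞ T(t)x t^{α−1} dt. -/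
/-!
Put `f t = t ^ α • T t x`. Its right derivative on `(0, ∞)` is
`α • t ^ (α - 1) • T t x + t ^ α • T t (A x)`, while `f 0 = 0` and `f t → 0` at infinity by the
decay bound, so the integral of this derivative over `(0, ∞)` vanishes; with
`Γ (α + 1) = α Γ (α)` that is the claimed identity. Near `0` orbits are bounded by continuity.
At infinity `t ^ α • T t (A x)` is integrable only if `T` decays faster than `t ^ (-(α + 1))`:
since `‖T t‖ ≤ ‖T (t / 2)‖ ^ 2`, a decay rate `t ^ (-δ)` improves to `t ^ (-2δ)`, hence to any rate.
-/

open MeasureTheory Filter Topology Set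

noncomputable section

section Decay

variable {X : Type*} [NormedAddCommGroup X] [NormedSpace ℂ X] {T : ℝ → X →L[ℂ] X}

theorem norm_apply_le_div_rpow {C d : ℝ} (hdecay : ∀ t : ℝ, 0 < t → ‖T t‖ ≤ C / t ^ d) (z : X)
    (t : ℝ) (ht : 0 < t) : ‖T t z‖ ≤ C * ‖z‖ / t ^ d :=
  calc ‖T t z‖ ≤ ‖T t‖ * ‖z‖ := (T t).le_opNorm z
    _ ≤ C / t ^ d * ‖z‖ := mul_le_mul_of_nonneg_right (hdecay t ht) (norm_nonneg z)
    _ = C * ‖z‖ / t ^ d := div_mul_eq_mul_div _ _ _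

theorem norm_le_div_rpow_two_mul_of_semigroup
    (hTadd : ∀ s t : ℝ, 0 ≤ s → 0 ≤ t → T (s + t) = (T s).comp (T t)) {C d : ℝ}
    (hdecay : ∀ t : ℝ, 0 < t → ‖T t‖ ≤ C / t ^ d) {t : ℝ} (ht : 0 < t) :
    ‖T t‖ ≤ C ^ 2 * 2 ^ (2 * d) / t ^ (2 * d) := by
  have ht2 : 0 < t / 2 := half_pos ht
  have hhalf := hdecay _ ht2
  calc ‖T t‖ = ‖(T (t / 2)).comp (T (t / 2))‖ := by rw [← hTadd _ _ ht2.le ht2.le, add_halves]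
    _ ≤ ‖T (t / 2)‖ * ‖T (t / 2)‖ := ContinuousLinearMap.opNorm_comp_le _ _
    _ ≤ C / (t / 2) ^ d * (C / (t / 2) ^ d) :=
        mul_le_mul hhalf hhalf (norm_nonneg _) ((norm_nonneg _).trans hhalf)
    _ = C ^ 2 * 2 ^ (2 * d) / t ^ (2 * d) := by
        rw [Real.div_rpow ht.le zero_le_two, two_mul, Real.rpow_add ht, Real.rpow_add two_pos]
        field_simp

theorem exists_norm_le_div_rpow_gt_of_semigroup
    (hTadd : ∀ s t : ℝ, 0 ≤ s → 0 ≤ t → T (s + t) = (T s).comp (T t)) {C δ : ℝ} (hδ : 0 < δ)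
    (hdecay : ∀ t : ℝ, 0 < t → ‖T t‖ ≤ C / t ^ δ) (β : ℝ) :
    ∃ C' δ' : ℝ, β < δ' ∧ ∀ t : ℝ, 0 < t → ‖T t‖ ≤ C' / t ^ δ' := by
  have hdouble : ∀ k : ℕ, ∃ C' : ℝ, ∀ t : ℝ, 0 < t → ‖T t‖ ≤ C' / t ^ (2 ^ k * δ) := by
    intro k
    induction k with
    | zero => exact ⟨C, by simpa using hdecay⟩
    | succ k ih =>
      obtain ⟨C', hC'⟩ := ih
      refine ⟨C' ^ 2 * 2 ^ (2 * (2 ^ k * δ)), fun t ht => ?_⟩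
      rw [pow_succ' (2 : ℝ) k, mul_assoc]
      exact norm_le_div_rpow_two_mul_of_semigroup hTadd hC' ht
  obtain ⟨k, hk⟩ := pow_unbounded_of_one_lt (β / δ) one_lt_two
  obtain ⟨C', hC'⟩ := hdouble k
  exact ⟨C', 2 ^ k * δ, (div_lt_iff₀ hδ).1 hk, hC'⟩

end Decay

section RpowSmul

variable {E : Type*} [NormedAddCommGroup E] [NormedSpace ℝ E] {g : ℝ → E} {K d β : ℝ}

theorem norm_rpow_smul_le_of_norm_le_div_rpow {t : ℝ} (ht : 0 < t) (hg : ‖g t‖ ≤ K / t ^ d) :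
    ‖t ^ β • g t‖ ≤ K * t ^ (β - d) := by
  rw [norm_smul, Real.norm_of_nonneg (Real.rpow_nonneg ht.le _), Real.rpow_sub ht]
  calc t ^ β * ‖g t‖ ≤ t ^ β * (K / t ^ d) :=
        mul_le_mul_of_nonneg_left hg (Real.rpow_nonneg ht.le _)
    _ = K * (t ^ β / t ^ d) := by ring

theorem tendsto_rpow_smul_atTop_zero_of_norm_le_div_rpow
    (hg : ∀ t : ℝ, 0 < t → ‖g t‖ ≤ K / t ^ d) (hβ : β < d) :
    Tendsto (fun t : ℝ => t ^ β • g t) atTop (𝓝 0) := by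
  have hdom : Tendsto (fun t : ℝ => K * t ^ (β - d)) atTop (𝓝 0) := by
    simpa using (tendsto_rpow_neg_atTop (sub_pos.2 hβ)).const_mul K
  refine squeeze_zero_norm' ?_ hdom
  filter_upwards [eventually_gt_atTop 0] with t ht
  exact norm_rpow_smul_le_of_norm_le_div_rpow ht (hg t ht)

theorem integrableOn_Ioi_rpow_smul_of_norm_le_div_rpow (hcont : ContinuousOn g (Ici 0))
    (hg : ∀ t : ℝ, 0 < t → ‖g t‖ ≤ K / t ^ d) (hβ : -1 < β) (hβd : β - d < -1) :
    IntegrableOn (fun t : ℝ => t ^ β • g t) (Ioi 0) := by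
  rw [← Ioc_union_Ioi_eq_Ioi zero_le_one]
  refine IntegrableOn.union ?_ ?_
  · exact (intervalIntegral.intervalIntegrable_rpow' hβ).1.smul_continuousOn_of_subset
      (hcont.mono Icc_subset_Ici_self) measurableSet_Ioc isCompact_Icc Ioc_subset_Icc_self
  · have hcont' : ContinuousOn (fun t : ℝ => t ^ β • g t) (Ioi 1) :=
      ((continuousOn_id.rpow_const fun t ht => Or.inl (zero_lt_one.trans ht).ne').smul
        (hcont.mono fun t ht => mem_Ici.2 (zero_le_one.trans (le_of_lt ht))))
    refine Integrable.mono' ((integrableOn_Ioi_rpow_of_lt hβd one_pos).const_mul K)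
      (hcont'.aestronglyMeasurable measurableSet_Ioi) ?_
    refine ae_restrict_of_forall_mem measurableSet_Ioi fun t ht => ?_
    have ht0 : 0 < t := zero_lt_one.trans ht
    exact norm_rpow_smul_le_of_norm_le_div_rpow ht0 (hg t ht0)

end RpowSmul

theorem integral_Ioi_of_hasDerivWithinAt_Ioi_of_tendsto {E : Type*} [NormedAddCommGroup E]
    [NormedSpace ℝ E] [CompleteSpace E] {f f' : ℝ → E} {a : ℝ} {m : E}
    (hcont : ContinuousOn f (Ici a)) (hderiv : ∀ x ∈ Ioi a, HasDerivWithinAt f (f' x) (Ioi x) x)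
    (f'int : IntegrableOn f' (Ioi a)) (hf : Tendsto f atTop (𝓝 m)) :
    ∫ x in Ioi a, f' x = m - f a := by
  refine tendsto_nhds_unique (intervalIntegral_tendsto_integral_Ioi a f'int tendsto_id) ?_
  refine (hf.sub_const (f a)).congr' ?_
  filter_upwards [eventually_ge_atTop a] with b hab
  exact (intervalIntegral.integral_eq_sub_of_hasDeriv_right_of_le hab
    (hcont.mono Icc_subset_Ici_self) (fun x hx => hderiv x hx.1)
    ((intervalIntegrable_iff_integrableOn_Ioc_of_le hab).2
      (f'int.mono_set Ioc_subset_Ioi_self))).symm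

section Generator

variable {X : Type*} [NormedAddCommGroup X] [NormedSpace ℂ X] {T : ℝ → X →L[ℂ] X} {x y : X}

theorem hasDerivWithinAt_Ioi_of_isGen
    (hTadd : ∀ s t : ℝ, 0 ≤ s → 0 ≤ t → T (s + t) = (T s).comp (T t)) (hxy : IsGen T x y)
    {t : ℝ} (ht : 0 ≤ t) : HasDerivWithinAt (fun s => T s x) (T t y) (Ioi t) t := by
  rw [hasDerivWithinAt_iff_tendsto_slope' self_notMem_Ioi]
  have hshift : Tendsto (fun s : ℝ => s - t) (𝓝[>] t) (𝓝[>] 0) :=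
    tendsto_nhdsWithin_iff.2
      ⟨by simpa using ((continuous_sub_right t).tendsto t).mono_left nhdsWithin_le_nhds,
        by filter_upwards [self_mem_nhdsWithin] with s (hs : t < s) using sub_pos.2 hs⟩
  refine (((T t).continuous.tendsto y).comp (hxy.comp hshift)).congr' ?_
  filter_upwards [self_mem_nhdsWithin] with s (hs : t < s)
  have hsplit : T s x = T t (T (s - t) x) := by
    rw [← ContinuousLinearMap.comp_apply, ← hTadd t (s - t) ht (sub_nonneg.2 hs.le),
      add_sub_cancel]
  simp only [Function.comp_apply, slope_def_module, hsplit, (T t).map_smul_of_tower, map_sub]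

theorem integral_rpow_smul_of_isGen [CompleteSpace X]
    (hTadd : ∀ s t : ℝ, 0 ≤ s → 0 ≤ t → T (s + t) = (T s).comp (T t))
    (hTcont : ContinuousOn (fun t => T t x) (Ici 0)) (hxy : IsGen T x y) {α : ℝ} (hα : 0 < α)
    (hy : IntegrableOn (fun t : ℝ => t ^ α • T t y) (Ioi 0))
    (hx : IntegrableOn (fun t : ℝ => t ^ (α - 1) • T t x) (Ioi 0))
    (hlim : Tendsto (fun t : ℝ => t ^ α • T t x) atTop (𝓝 0)) :
    ∫ t in Ioi 0, t ^ α • T t y = -(α • ∫ t in Ioi 0, t ^ (α - 1) • T t x) := by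
  have hcont : ContinuousOn (fun s : ℝ => s ^ α • T s x) (Ici 0) :=
    (Real.continuous_rpow_const hα.le).continuousOn.smul hTcont
  have hderiv : ∀ t ∈ Ioi (0 : ℝ), HasDerivWithinAt (fun s : ℝ => s ^ α • T s x)
      (t ^ α • T t y + α • t ^ (α - 1) • T t x) (Ioi t) t := fun t ht => by
    have hpow := (Real.hasDerivAt_rpow_const (p := α) (Or.inl (ne_of_gt ht))).hasDerivWithinAt
      (s := Ioi t)
    rw [← mul_smul]
    exact hpow.smul (hasDerivWithinAt_Ioi_of_isGen hTadd hxy (le_of_lt ht))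
  have hx' : IntegrableOn (fun t : ℝ => α • t ^ (α - 1) • T t x) (Ioi 0) := hx.smul α
  have hFTC := integral_Ioi_of_hasDerivWithinAt_Ioi_of_tendsto hcont hderiv (hy.add hx') hlim
  rw [integral_add hy hx', integral_smul, Real.zero_rpow hα.ne', zero_smul, sub_self] at hFTC
  exact eq_neg_of_add_eq_zero_left hFTC

end Generator

theorem stmt10_general {X : Type*} [NormedAddCommGroup X] [NormedSpace ℂ X] [CompleteSpace X]
    (T : ℝ → X →L[ℂ] X)
    (hTadd : ∀ s t : ℝ, 0 ≤ s → 0 ≤ t → T (s + t) = (T s).comp (T t))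
    (hTcont : ∀ x : X, ContinuousOn (fun t => T t x) (Ici (0 : ℝ)))
    (α C δ : ℝ) (hα0 : 0 < α) (hδ : α < δ)
    (hdecay : ∀ t : ℝ, 0 < t → ‖T t‖ ≤ C / t ^ δ) :
    ∀ x y : X, IsGen T x y →
      IntegrableOn (fun t => t ^ α • T t y) (Ici (0 : ℝ)) volume ∧
      IntegrableOn (fun t => t ^ (α - 1) • T t x) (Ici (0 : ℝ)) volume ∧
      Tendsto (fun t : ℝ => t ^ α • T t x) atTop (𝓝 (0 : X)) ∧
      (Real.Gamma (α + 1))⁻¹ • ∫ t in Ici (0 : ℝ), t ^ α • T t (-y) =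
        (Real.Gamma α)⁻¹ • ∫ t in Ici (0 : ℝ), t ^ (α - 1) • T t x := by
  intro x y hxy
  obtain ⟨C', δ', hδ', hdecay'⟩ :=
    exists_norm_le_div_rpow_gt_of_semigroup hTadd (hα0.trans hδ) hdecay (α + 1)
  have hy : IntegrableOn (fun t : ℝ => t ^ α • T t y) (Ioi 0) :=
    integrableOn_Ioi_rpow_smul_of_norm_le_div_rpow (hTcont y)
      (norm_apply_le_div_rpow hdecay' y) (by linarith) (by linarith)
  have hx : IntegrableOn (fun t : ℝ => t ^ (α - 1) • T t x) (Ioi 0) :=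
    integrableOn_Ioi_rpow_smul_of_norm_le_div_rpow (hTcont x)
      (norm_apply_le_div_rpow hdecay x) (by linarith) (by linarith)
  have hlim : Tendsto (fun t : ℝ => t ^ α • T t x) atTop (𝓝 0) :=
    tendsto_rpow_smul_atTop_zero_of_norm_le_div_rpow
      (norm_apply_le_div_rpow hdecay x) hδ
  refine ⟨(integrableOn_Ici_iff_integrableOn_Ioi).2 hy,
    (integrableOn_Ici_iff_integrableOn_Ioi).2 hx, hlim, ?_⟩
  simp only [map_neg, smul_neg, integral_neg, integral_Ici_eq_integral_Ioi]
  rw [integral_rpow_smul_of_isGen hTadd (hTcont x) hxy hα0 hy hx hlim, smul_neg, neg_neg, smul_smul,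
    Real.Gamma_add_one hα0.ne', mul_inv_rev, mul_assoc, inv_mul_cancel₀ hα0.ne', mul_one]

/-- Let `0 < α < 1` and suppose `‖T(t)‖ ≤ C/t^δ` for all `t > 0` with
`C > 0`, `δ > α`. Then for every `x ∈ D(A)` the Bochner integrals
`∫₀^∞ t^α • T(t)(Ax) dt` and `∫₀^∞ t^{α−1} • T(t)x dt` exist, `t^α • T(t)x → 0` as
`t → ∞`, and `Γ(α+1)⁻¹ • ∫₀^∞ t^α • T(t)(−Ax) dt = Γ(α)⁻¹ • ∫₀^∞ t^{α−1} • T(t)x dt`. -/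
theorem stmt10 {X : Type*} [NormedAddCommGroup X] [NormedSpace ℂ X] [CompleteSpace X]
    (T : ℝ → X →L[ℂ] X)
    (hT0 : T 0 = ContinuousLinearMap.id ℂ X)
    (hTadd : ∀ s t : ℝ, 0 ≤ s → 0 ≤ t → T (s + t) = (T s).comp (T t))
    (hTcont : ∀ x : X, ContinuousOn (fun t => T t x) (Ici (0 : ℝ)))
    (hTbdd : ∃ M : ℝ, ∀ t : ℝ, 0 ≤ t → ‖T t‖ ≤ M)
    (α C δ : ℝ) (hα0 : 0 < α) (hα1 : α < 1) (hC : 0 < C) (hδ : α < δ)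
    (hdecay : ∀ t : ℝ, 0 < t → ‖T t‖ ≤ C / t ^ δ) :
    ∀ x y : X, IsGen T x y →
      IntegrableOn (fun t => t ^ α • T t y) (Ici (0 : ℝ)) volume ∧
      IntegrableOn (fun t => t ^ (α - 1) • T t x) (Ici (0 : ℝ)) volume ∧
      Tendsto (fun t : ℝ => t ^ α • T t x) atTop (𝓝 (0 : X)) ∧
      (Real.Gamma (α + 1))⁻¹ • ∫ t in Ici (0 : ℝ), t ^ α • T t (-y) =
        (Real.Gamma α)⁻¹ • ∫ t in Ici (0 : ℝ), t ^ (α - 1) • T t x :=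
  stmt10_general T hTadd hTcont α C δ hα0 hδ hdecay
end
end

section
/- Let ρ be a positive Borel measure on (0,∞) such that ρ((0,r]) < ∞ and ∫_{(r,∞)} u^{-1} dρ(u) < ∞ for every r > 0. Define f(r) := ∫_{(r,∞)} u^{-1} dρ(u) for r > 0. Then for every s < 0: ∫_{(0,∞)} (e^{su} − 1) u^{-1} dρ(u) = s · ∫₀^∞ e^{sr} f(r) dr; equivalently, the function ψ(s) := ∫_{(0,∞)} (e^{su} − 1)u^{-1} dρ(u) satisfies ψ(s)/s = ∫₀^∞ e^{sr} f(r) dr for s < 0. -/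
/-!
For `u > 0`, `(e^{su} - 1) u⁻¹ = s · u⁻¹ ∫₀^u e^{sr} dr`, so both sides are iterated integrals of
`e^{sr} u⁻¹` over the triangle `0 < r < u` against `ρ ⊗ dr`, and Fubini exchanges them. Absolute
integrability holds because `0 ≤ (1 - e^{su}) u⁻¹ ≤ min (-s) u⁻¹`, which is `ρ`-integrable on
`(0, 1]` by finiteness of `ρ` there and on `(1, ∞)` by integrability of `u⁻¹`.
-/

open MeasureTheory Filter Topology Set

theorem integral_mul_integral_Ioo_eq_integral_mul_integral_Ioi {ρ ν : Measure ℝ} [SFinite ρ]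
    [SFinite ν] {g h : ℝ → ℝ} {a : ℝ} (hg : Measurable g) (hh : Measurable h)
    (hh_int : ∀ u, IntegrableOn h (Ioo a u) ν)
    (hgh : Integrable (fun u => ‖g u‖ * ∫ r in Ioo a u, ‖h r‖ ∂ν) ρ) :
    ∫ u, g u * (∫ r in Ioo a u, h r ∂ν) ∂ρ =
      ∫ r in Ioi a, h r * (∫ u in Ioi r, g u ∂ρ) ∂ν := by
  set F : ℝ → ℝ → ℝ := fun u r => g u * (Ioo a u).indicator h r
  have hF_meas : Measurable (Function.uncurry F) := by
    have hT : MeasurableSet {p : ℝ × ℝ | p.2 ∈ Ioo a p.1} :=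
      (measurableSet_lt measurable_const measurable_snd).inter
        (measurableSet_lt measurable_snd measurable_fst)
    exact (hg.comp measurable_fst).mul ((hh.comp measurable_snd).indicator hT)
  have hslice : ∀ (k : ℝ → ℝ) (c u : ℝ),
      ∫ r in Ioi a, c * (Ioo a u).indicator k r ∂ν = c * ∫ r in Ioo a u, k r ∂ν := by
    intro k c u
    rw [integral_const_mul, integral_indicator measurableSet_Ioo,
      Measure.restrict_restrict measurableSet_Ioo, Ioo_inter_Ioi, max_self]
  have hF_int : Integrable (Function.uncurry F) (ρ.prod (ν.restrict (Ioi a))) := by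
    refine (integrable_prod_iff hF_meas.aestronglyMeasurable).2 ⟨?_, ?_⟩
    · refine Eventually.of_forall fun u => ?_
      exact (((integrable_indicator_iff measurableSet_Ioo).2 (hh_int u)).mono_measure
        Measure.restrict_le_self).const_mul (g u)
    · refine hgh.congr (Eventually.of_forall fun u => ?_)
      simp only [Function.uncurry_apply_pair, F, norm_mul, norm_indicator_eq_indicator_norm]
      exact (hslice _ _ u).symm
  have hright : ∀ r ∈ Ioi a, ∫ u, F u r ∂ρ = h r * ∫ u in Ioi r, g u ∂ρ := by
    intro r hr
    have hF : ∀ u, F u r = (Ioi r).indicator (fun u => h r * g u) u := by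
      intro u
      by_cases hu : r < u <;> simp [F, indicator, hu, mem_Ioi.1 hr, mul_comm]
    simp_rw [hF, integral_indicator measurableSet_Ioi, integral_const_mul]
  calc ∫ u, g u * (∫ r in Ioo a u, h r ∂ν) ∂ρ = ∫ u, ∫ r in Ioi a, F u r ∂ν ∂ρ := by
        simp_rw [F, hslice]
    _ = ∫ r in Ioi a, ∫ u, F u r ∂ρ ∂ν := integral_integral_swap hF_int
    _ = _ := setIntegral_congr_fun measurableSet_Ioi hright

theorem isLocallyFiniteMeasure_restrict_Ioi {ρ : Measure ℝ} {a : ℝ}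
    (hρ : ∀ r, a < r → ρ (Ioc a r) < ⊤) : IsLocallyFiniteMeasure (ρ.restrict (Ioi a)) := by
  refine ⟨fun x => ⟨Iio (max x a + 1), Iio_mem_nhds (by linarith [le_max_left x a]), ?_⟩⟩
  rw [Measure.restrict_apply measurableSet_Iio, Iio_inter_Ioi]
  exact (measure_mono Ioo_subset_Ioc_self).trans_lt (hρ _ (by linarith [le_max_right x a]))

theorem integral_exp_mul_Ioo {s : ℝ} (hs : s ≠ 0) {u : ℝ} (hu : 0 ≤ u) :
    ∫ r in Ioo 0 u, Real.exp (s * r) = (Real.exp (s * u) - 1) / s := by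
  rw [← integral_Ioc_eq_integral_Ioo, ← intervalIntegral.integral_of_le hu,
    intervalIntegral.integral_comp_mul_left (fun x => Real.exp x) hs, integral_exp]
  simp [div_eq_inv_mul]

theorem integrableOn_exp_mul_sub_one_mul_inv {ρ : Measure ℝ} {s : ℝ} (hs : s ≤ 0)
    (hρ : ρ (Ioc 0 1) < ⊤) (hinv : IntegrableOn (fun u : ℝ => u⁻¹) (Ioi 1) ρ) :
    IntegrableOn (fun u => (Real.exp (s * u) - 1) * u⁻¹) (Ioi 0) ρ := by
  have hmeas : Measurable fun u : ℝ => (Real.exp (s * u) - 1) * u⁻¹ := by fun_prop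
  have hnorm : ∀ u : ℝ, 0 < u →
      ‖(Real.exp (s * u) - 1) * u⁻¹‖ = (1 - Real.exp (s * u)) * u⁻¹ := by
    intro u hu
    have : Real.exp (s * u) ≤ 1 := Real.exp_le_one_iff.2 (mul_nonpos_of_nonpos_of_nonneg hs hu.le)
    rw [norm_mul, Real.norm_of_nonpos (by linarith), norm_inv, Real.norm_of_nonneg hu.le, neg_sub]
  rw [← Ioc_union_Ioi_eq_Ioi zero_le_one]
  refine IntegrableOn.union ?_ ?_
  · refine Measure.integrableOn_of_bounded hρ.ne hmeas.aestronglyMeasurable (M := -s) ?_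
    filter_upwards [ae_restrict_mem measurableSet_Ioc] with u hu
    obtain ⟨hu, -⟩ := hu
    rw [hnorm u hu]
    calc (1 - Real.exp (s * u)) * u⁻¹ ≤ -(s * u) * u⁻¹ := by
          gcongr; linarith [Real.add_one_le_exp (s * u)]
      _ = -s := by field_simp [hu.ne']
  · refine hinv.mono' hmeas.aestronglyMeasurable ?_
    filter_upwards [ae_restrict_mem measurableSet_Ioi] with u hu
    rw [hnorm u (zero_lt_one.trans hu)]
    have hu0 : 0 < u⁻¹ := inv_pos.2 (zero_lt_one.trans hu)
    nlinarith [Real.exp_pos (s * u)]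

/-- Let `ρ` be a positive Borel measure on `(0,∞)` with
`ρ((0,r]) < ∞` and `∫_{(r,∞)} u⁻¹ dρ(u) < ∞` for every `r > 0`, and set
`f(r) := ∫_{(r,∞)} u⁻¹ dρ(u)`. Then for every `s < 0`:
`∫_{(0,∞)} (e^{su} − 1) u⁻¹ dρ(u) = s · ∫₀^∞ e^{sr} f(r) dr`. -/
theorem stmt11 (ρ : Measure ℝ)
    (hρfin : ∀ r : ℝ, 0 < r → ρ (Ioc (0 : ℝ) r) < ⊤)
    (hρint : ∀ r : ℝ, 0 < r → IntegrableOn (fun u : ℝ => u⁻¹) (Ioi r) ρ) :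
    ∀ s : ℝ, s < 0 →
      ∫ u in Ioi (0 : ℝ), (Real.exp (s * u) - 1) * u⁻¹ ∂ρ =
        s * ∫ r in Ioi (0 : ℝ), Real.exp (s * r) * (∫ u in Ioi r, u⁻¹ ∂ρ) := by
  intro s hs
  -- through `sigmaFinite_of_locallyFinite`, this supplies the `SFinite` instance Fubini needs
  have := isLocallyFiniteMeasure_restrict_Ioi hρfin
  have hψ := integrableOn_exp_mul_sub_one_mul_inv hs.le (hρfin 1 one_pos) (hρint 1 one_pos)
  have hinner : EqOn (fun u => u⁻¹ * ∫ r in Ioo 0 u, Real.exp (s * r))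
      (fun u => s⁻¹ * ((Real.exp (s * u) - 1) * u⁻¹)) (Ioi 0) := fun u hu => by
    simp only [integral_exp_mul_Ioo hs.ne (le_of_lt hu)]
    ring
  have hnorm : EqOn (fun u => ‖u⁻¹‖ * ∫ r in Ioo 0 u, ‖Real.exp (s * r)‖)
      (fun u => u⁻¹ * ∫ r in Ioo 0 u, Real.exp (s * r)) (Ioi 0) := fun u hu => by
    simp only [Real.norm_of_nonneg (Real.exp_pos _).le,
      Real.norm_of_nonneg (inv_nonneg.2 (le_of_lt hu))]
  have hswap := integral_mul_integral_Ioo_eq_integral_mul_integral_Ioi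
    (ρ := ρ.restrict (Ioi 0)) (ν := volume) (g := fun u => u⁻¹)
    (h := fun r => Real.exp (s * r)) measurable_inv (by fun_prop)
    (fun u => (by fun_prop : Continuous fun r => Real.exp (s * r)).integrableOn_Icc.mono_set
      Ioo_subset_Icc_self)
    (IntegrableOn.congr_fun (hψ.const_mul s⁻¹) (hnorm.trans hinner).symm measurableSet_Ioi)
  rw [setIntegral_congr_fun measurableSet_Ioi hinner, integral_const_mul] at hswap
  have hright : EqOn (fun r => Real.exp (s * r) * ∫ u in Ioi r, u⁻¹ ∂ρ.restrict (Ioi 0))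
      (fun r => Real.exp (s * r) * ∫ u in Ioi r, u⁻¹ ∂ρ) (Ioi 0) := fun r hr => by
    simp only [Measure.restrict_restrict measurableSet_Ioi, Ioi_inter_Ioi,
      max_eq_left (mem_Ioi.1 hr).le]
  rw [setIntegral_congr_fun measurableSet_Ioi hright] at hswap
  rw [← hswap, mul_inv_cancel_left₀ hs.ne]
end
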